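/- Let B be a DFA. Then there exists a DFA B' such that L(B') = L(B) and ent(B) = ent(B') = width(B'). -/

import Mathlib

/-- A deterministic finite automaton with a (possibly partial) transition function,
a unique initial state and a set of final states. -/
structure PDFA (α : Type*) (σ : Type*) where
  step : σ → α → Option σ
  start : σ
  accept : Set σ

namespace PDFA

variable {α : Type*} {σ : Type*}

/-- The transition function extended to strings (read left to right). -/
def evalFrom (M : PDFA α σ) : σ → List α → Option σ
  | q, [] => some q
  | q, a :: w =>
    match M.step q a with
    | none => none
    | some q' => M.evalFrom q' w

/-- `δ(s, w)`. -/
def eval (M : PDFA α σ) (w : List α) : Option σ :=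
  M.evalFrom M.start w

/-- The language accepted by the automaton. -/
def language (M : PDFA α σ) : Set (List α) :=
  {w | ∃ q, M.eval w = some q ∧ q ∈ M.accept}

/-- `Pref(L(M))`: the set of prefixes of accepted words. -/
def prefLang (M : PDFA α σ) : Set (List α) :=
  {w | ∃ v, w ++ v ∈ M.language}

/-- `I_q`: the words of `Pref(L(M))` reaching state `q`. -/
def I (M : PDFA α σ) (q : σ) : Set (List α) :=
  {w | w ∈ M.prefLang ∧ M.eval w = some q}

/-- Every state is reachable from the initial state, and from every state a final
state can be reached. -/
def Trim (M : PDFA α σ) : Prop :=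
  (∀ q : σ, ∃ w : List α, M.eval w = some q) ∧
  (∀ q : σ, ∃ w : List α, ∃ q' : σ, M.evalFrom q w = some q' ∧ q' ∈ M.accept)

variable [LinearOrder α]

/-- A sequence of words which is monotone (non-decreasing or non-increasing) in the
co-lexicographic order (i.e., lexicographic order of the reversed words). -/
def MonotoneColex (x : ℕ → List α) : Prop :=
  (∀ i j : ℕ, i ≤ j → (x i).reverse ≤ (x j).reverse) ∨
  (∀ i j : ℕ, i ≤ j → (x j).reverse ≤ (x i).reverse)

/-- A set of states is entangled if a single monotone sequence of words of
`Pref(L(M))` reaches each of its states infinitely many times. -/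
def EntangledStates (M : PDFA α σ) (S : Set σ) : Prop :=
  ∃ x : ℕ → List α, (∀ i, x i ∈ M.prefLang) ∧ MonotoneColex x ∧
    ∀ q ∈ S, ∀ n : ℕ, ∃ i : ℕ, n ≤ i ∧ M.eval (x i) = some q

/-- `ent(M)`: the maximum cardinality of an entangled set of states. -/
noncomputable def ent (M : PDFA α σ) [Fintype σ] : ℕ :=
  sSup {n : ℕ | ∃ S : Finset σ, S.card = n ∧ M.EntangledStates ↑S}

/-- The strict co-lex partial order on states: `q₁ ≺ q₂` iff `q₁ ≠ q₂` and every word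
reaching `q₁` is co-lexicographically smaller than every word reaching `q₂`. -/
def stateLt (M : PDFA α σ) (q₁ q₂ : σ) : Prop :=
  q₁ ≠ q₂ ∧ ∀ u ∈ M.I q₁, ∀ v ∈ M.I q₂, u.reverse < v.reverse

/-- A set of states which is an antichain for the co-lex partial order. -/
def IsColexAntichain (M : PDFA α σ) (S : Set σ) : Prop :=
  ∀ q₁ ∈ S, ∀ q₂ ∈ S, q₁ ≠ q₂ → ¬ M.stateLt q₁ q₂ ∧ ¬ M.stateLt q₂ q₁

/-- `width(M)`: the maximum cardinality of a co-lex antichain of states. -/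
noncomputable def width (M : PDFA α σ) [Fintype σ] : ℕ :=
  sSup {n : ℕ | ∃ S : Finset σ, S.card = n ∧ M.IsColexAntichain ↑S}

/-- `V` is convex in `(Pref(L(M)), ⪯)`. -/
def ConvexIn (M : PDFA α σ) (V : Set (List α)) : Prop :=
  ∀ ⦃u v w : List α⦄, u ∈ V → w ∈ V → v ∈ M.prefLang →
    u.reverse ≤ v.reverse → v.reverse ≤ w.reverse → v ∈ V

/-- A set of words `V` is entangled in `M` if some monotone sequence of elements of `V`
passes through each state occurring in `V` infinitely many times. -/
def EntangledWords (M : PDFA α σ) (V : Set (List α)) : Prop :=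
  ∃ x : ℕ → List α, (∀ i, x i ∈ V) ∧ MonotoneColex x ∧
    ∀ q : σ, (∃ w ∈ V, M.eval w = some q) →
      ∀ n : ℕ, ∃ i : ℕ, n ≤ i ∧ M.eval (x i) = some q

/-- An entangled convex (e.c.) decomposition of `M`: a partition of `Pref(L(M))` into
convex, entangled sets. -/
def IsECD (M : PDFA α σ) (V : Set (Set (List α))) : Prop :=
  (⋃₀ V) = M.prefLang ∧ V.Pairwise Disjoint ∧
    ∀ W ∈ V, M.ConvexIn W ∧ M.EntangledWords W

/-- A minimum-size e.c. decomposition: a finite e.c. decomposition of minimum cardinality. -/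
def IsMinECD (M : PDFA α σ) (V : Set (Set (List α))) : Prop :=
  V.Finite ∧ M.IsECD V ∧
    ∀ V' : Set (Set (List α)), V'.Finite → M.IsECD V' → V.ncard ≤ V'.ncard

/-- The equivalence relation `∼_𝒱`: two words are equivalent iff they reach the same state
and every element of `𝒱` lying strictly co-lexicographically between them intersects `I_q`. -/
def simV (M : PDFA α σ) (V : Set (Set (List α))) (u v : List α) : Prop :=
  M.eval u = M.eval v ∧
  ∀ W ∈ V,
    (∀ w ∈ W, min u.reverse v.reverse < w.reverse ∧ w.reverse < max u.reverse v.reverse) →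
    ∃ w ∈ W, M.eval w = M.eval u

/-- The decomposition-free characterization of `∼`: the two words reach the same state and
the co-lex interval between them is covered by finitely many convex sets, each entangled in
`M` and intersecting `I_q`. -/
def simR (M : PDFA α σ) (u v : List α) : Prop :=
  M.eval u = M.eval v ∧
  ∃ (n : ℕ) (C : Fin n → Set (List α)),
    (∀ i, C i ⊆ M.prefLang ∧ M.ConvexIn (C i) ∧ M.EntangledWords (C i) ∧
      ∃ w ∈ C i, M.eval w = M.eval u) ∧
    ∀ w ∈ M.prefLang,
      min u.reverse v.reverse ≤ w.reverse → w.reverse ≤ max u.reverse v.reverse →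
      w ∈ ⋃ i, C i

end PDFA


/-!
Merge two words of `Pref(L(B))` when they reach the same state and lie in a common convex
entangled set, and close under transitivity (`PDFA.Sim`). This is a right congruence refining
the states of `B`, so its classes are the states of a DFA `B'` with `L(B') = L(B)`. A window
argument along monotone sequences shows that a state of `B` splits into finitely many classes,
and classes are convex within a state, so entangled sets of `B` and `B'` correspond and
`ent(B) = ent(B')`.

For `width(B') = ent(B')`, entangled sets are always antichains. Conversely, two incomparable
classes of `B'` meet a convex entangled set carrying two states, hence accumulate at a common
point of the co-lex line (a cut approached from one side). For larger antichains, drop each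
class in turn to get points by induction; if the classes dropped at the extreme points are `a`
and `b`, a third class accumulates on both sides of its own point and can be moved to a point
shared by all. A monotone sequence circling through the classes near that point shows the
antichain is entangled.
-/

namespace PDFA

variable {α σ : Type*} {M : PDFA α σ}

theorem evalFrom_append (M : PDFA α σ) (q : σ) (u v : List α) :
    M.evalFrom q (u ++ v) = (M.evalFrom q u).bind fun p => M.evalFrom p v := by
  induction u generalizing q with
  | nil => rfl
  | cons a u ih =>
    simp only [List.cons_append, evalFrom]
    cases M.step q a <;> simp [ih]

theorem eval_append (M : PDFA α σ) (u v : List α) :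
    M.eval (u ++ v) = (M.eval u).bind fun p => M.evalFrom p v :=
  M.evalFrom_append M.start u v

theorem eval_snoc (M : PDFA α σ) (u : List α) (a : α) :
    M.eval (u ++ [a]) = (M.eval u).bind fun p => M.step p a := by
  rw [eval_append]
  congr 1
  funext p
  rcases h : M.step p a with _ | p' <;> simp [evalFrom, h]

theorem mem_prefLang_of_append_mem {u v : List α} (h : u ++ v ∈ M.prefLang) :
    u ∈ M.prefLang := by
  obtain ⟨z, hz⟩ := h
  exact ⟨v ++ z, by rwa [← List.append_assoc]⟩

theorem mem_prefLang_of_mem_language {w : List α} (h : w ∈ M.language) : w ∈ M.prefLang :=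
  ⟨[], by simpa using h⟩

theorem exists_eval_eq_some_of_mem_prefLang {w : List α} (h : w ∈ M.prefLang) :
    ∃ q, M.eval w = some q := by
  obtain ⟨v, q, hq, -⟩ := h
  rw [eval_append] at hq
  cases he : M.eval w with
  | none => simp [he] at hq
  | some p => exact ⟨p, rfl⟩

theorem mem_prefLang_of_eval_eq {u v : List α} (he : M.eval u = M.eval v)
    (h : u ∈ M.prefLang) : v ∈ M.prefLang := by
  obtain ⟨z, q, hq, hacc⟩ := h
  refine ⟨z, q, ?_, hacc⟩
  rwa [eval_append, ← he, ← eval_append]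

theorem Trim.nil_mem_prefLang (hM : M.Trim) : [] ∈ M.prefLang := by
  obtain ⟨w, q, hq, hacc⟩ := hM.2 M.start
  exact ⟨w, q, hq, hacc⟩

variable [LinearOrder α]

theorem lex_cons_le_cons_iff {a b : α} {l m : List α} :
    a :: l ≤ b :: m ↔ a < b ∨ a = b ∧ l ≤ m := by
  rw [← not_lt, ← not_lt, List.cons_lt_cons_iff]
  grind

theorem reverse_snoc_le_reverse_snoc_iff {u v : List α} (a : α) :
    (u ++ [a]).reverse ≤ (v ++ [a]).reverse ↔ u.reverse ≤ v.reverse := by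
  simp [lex_cons_le_cons_iff]

theorem exists_eq_snoc_of_between_snoc {u v m : List α} {a : α}
    (h₁ : (u ++ [a]).reverse ≤ m.reverse) (h₂ : m.reverse ≤ (v ++ [a]).reverse) :
    ∃ m', m = m' ++ [a] ∧ u.reverse ≤ m'.reverse ∧ m'.reverse ≤ v.reverse := by
  rcases hm : m.reverse with _ | ⟨b, l⟩
  · rw [hm, List.reverse_append] at h₁
    exact absurd (List.nil_lt_cons _ _) (not_lt.mpr h₁)
  · simp only [hm, List.reverse_append, List.reverse_singleton, List.singleton_append,
      lex_cons_le_cons_iff] at h₁ h₂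
    obtain rfl : b = a := by grind
    refine ⟨l.reverse, ?_, ?_, ?_⟩
    · rw [← List.reverse_reverse m, hm]
      simp
    · simpa [lt_irrefl] using h₁
    · simpa [lt_irrefl] using h₂

theorem MonotoneColex.comp_monotone {x : ℕ → List α} (hx : MonotoneColex x) {φ : ℕ → ℕ}
    (hφ : Monotone φ) : MonotoneColex (x ∘ φ) := by
  rcases hx with hx | hx
  · exact Or.inl fun i j hij => hx _ _ (hφ hij)
  · exact Or.inr fun i j hij => hx _ _ (hφ hij)

theorem MonotoneColex.snoc {x : ℕ → List α} (hx : MonotoneColex x) (a : α) :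
    MonotoneColex fun i => x i ++ [a] := by
  simp only [MonotoneColex, reverse_snoc_le_reverse_snoc_iff]
  exact hx

def Between (v u w : List α) : Prop :=
  (u.reverse ≤ v.reverse ∧ v.reverse ≤ w.reverse) ∨
  (w.reverse ≤ v.reverse ∧ v.reverse ≤ u.reverse)

theorem Between.eq_of_self {v u : List α} (h : Between v u u) : v = u := by
  rcases h with ⟨h₁, h₂⟩ | ⟨h₁, h₂⟩ <;> exact List.reverse_injective (le_antisymm h₂ h₁)

theorem Between.of_not_between {v a c w : List α} (hb : Between v a w)
    (hc : ¬ Between v c w) : Between v a c := by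
  unfold Between at *
  push Not at hc
  rcases hb with ⟨h₁, h₂⟩ | ⟨h₁, h₂⟩
  · exact Or.inl ⟨h₁, le_of_not_ge fun h => absurd h₂ (not_le.mpr (hc.1 h))⟩
  · exact Or.inr ⟨(hc.2 h₁).le, h₂⟩

end PDFA

theorem Relation.ReflTransGen.exists_crossing {β : Type*} {r : β → β → Prop} {P : β → Prop}
    {a b : β} (h : Relation.ReflTransGen r a b) (ha : P a) (hb : ¬ P b) :
    ∃ c d, Relation.ReflTransGen r a c ∧ r c d ∧ P c ∧ ¬ P d := by
  induction h with
  | refl => exact absurd ha hb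
  | @tail c d hac hcd ih =>
    by_cases hc : P c
    · exact ⟨c, d, hac, hcd, hc, hb⟩
    · exact ih hc

theorem exists_monotone_retraction_of_frequently {J : ℕ → Prop} (hJ : ∀ n, ∃ k, n ≤ k ∧ J k) :
    ∃ ψ : ℕ → ℕ, Monotone ψ ∧ (∀ n, J (ψ n)) ∧ ∀ k, J k → ψ k = k := by
  classical
  refine ⟨fun n => Nat.find (hJ n), fun m n hmn => ?_, fun n => (Nat.find_spec (hJ n)).2,
    fun k hk => le_antisymm (Nat.find_min' _ ⟨le_rfl, hk⟩) (Nat.find_spec (hJ k)).1⟩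
  exact Nat.find_min' _ ⟨hmn.trans (Nat.find_spec (hJ n)).1, (Nat.find_spec (hJ n)).2⟩

namespace PDFA

variable {α σ : Type*} [LinearOrder α] {M : PDFA α σ}

def IsConvexEntangled (M : PDFA α σ) (E : Set (List α)) : Prop :=
  E ⊆ M.prefLang ∧ M.ConvexIn E ∧ M.EntangledWords E

theorem IsConvexEntangled.mem_of_between {E : Set (List α)} (hE : M.IsConvexEntangled E)
    {x y v : List α} (hx : x ∈ E) (hy : y ∈ E) (hv : v ∈ M.prefLang) (hb : Between v x y) :
    v ∈ E := by
  rcases hb with ⟨h₁, h₂⟩ | ⟨h₁, h₂⟩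
  · exact hE.2.1 hx hy hv h₁ h₂
  · exact hE.2.1 hy hx hv h₁ h₂

theorem isConvexEntangled_singleton {w : List α} (hw : w ∈ M.prefLang) :
    M.IsConvexEntangled {w} := by
  refine ⟨Set.singleton_subset_iff.mpr hw, ?_, fun _ => w, fun _ => rfl,
    Or.inl fun _ _ _ => le_rfl, ?_⟩
  · rintro u v w' rfl rfl - h₁ h₂
    exact List.reverse_injective (le_antisymm h₂ h₁)
  · rintro q ⟨_, rfl, hq⟩ n
    exact ⟨n, le_rfl, hq⟩

theorem IsConvexEntangled.snoc {E : Set (List α)} (hE : M.IsConvexEntangled E) (a : α)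
    {z : List α} (hz : z ∈ E) (hza : z ++ [a] ∈ M.prefLang) :
    M.IsConvexEntangled ((· ++ [a]) '' E ∩ M.prefLang) := by
  obtain ⟨hEP, hconv, x, hxE, hxm, hxh⟩ := hE
  refine ⟨Set.inter_subset_right, ?_, ?_⟩
  · rintro u v w ⟨⟨z₁, hz₁, rfl⟩, -⟩ ⟨⟨z₂, hz₂, rfl⟩, -⟩ hv h₁ h₂
    obtain ⟨m, rfl, hm₁, hm₂⟩ := exists_eq_snoc_of_between_snoc h₁ h₂
    exact ⟨⟨m, hconv hz₁ hz₂ (mem_prefLang_of_append_mem hv) hm₁ hm₂, rfl⟩, hv⟩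
  have hsnoc : ∀ {i y}, M.eval (x i) = M.eval y → M.eval (x i ++ [a]) = M.eval (y ++ [a]) :=
    fun h => by rw [eval_snoc, eval_snoc, h]
  have hfreq : ∀ y ∈ E, ∀ n, ∃ i, n ≤ i ∧ M.eval (x i) = M.eval y := by
    intro y hy n
    obtain ⟨p, hp⟩ := exists_eval_eq_some_of_mem_prefLang (hEP hy)
    obtain ⟨i, hi, h⟩ := hxh p ⟨y, hy, hp⟩ n
    exact ⟨i, hi, h.trans hp.symm⟩
  -- Reindex `x` so that it only visits words that can still read `a`; this keeps every visit
  -- to a state of `E` that can read `a`.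
  obtain ⟨ψ, hψ, hψJ, hψfix⟩ := exists_monotone_retraction_of_frequently
    (J := fun i => x i ++ [a] ∈ M.prefLang) fun n => by
      obtain ⟨i, hi, h⟩ := hfreq z hz n
      exact ⟨i, hi, mem_prefLang_of_eval_eq (hsnoc h).symm hza⟩
  refine ⟨fun n => x (ψ n) ++ [a], fun n => ⟨⟨_, hxE _, rfl⟩, hψJ n⟩,
    (hxm.comp_monotone hψ).snoc a, ?_⟩
  rintro q ⟨_, ⟨⟨y, hy, rfl⟩, hyP⟩, hq⟩ n
  obtain ⟨i, hi, h⟩ := hfreq y hy n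
  refine ⟨i, hi, ?_⟩
  show M.eval (x (ψ i) ++ [a]) = some q
  rw [hψfix i (mem_prefLang_of_eval_eq (hsnoc h).symm hyP), hsnoc h, hq]

def Linked (M : PDFA α σ) (u v : List α) : Prop :=
  M.eval u = M.eval v ∧ ∃ E, M.IsConvexEntangled E ∧ u ∈ E ∧ v ∈ E

theorem Linked.symm {u v : List α} (h : M.Linked u v) : M.Linked v u :=
  let ⟨he, E, hE, hu, hv⟩ := h
  ⟨he.symm, E, hE, hv, hu⟩

theorem Linked.snoc {u v : List α} (h : M.Linked u v) (a : α) (hu : u ++ [a] ∈ M.prefLang) :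
    M.Linked (u ++ [a]) (v ++ [a]) := by
  have hev : M.eval (u ++ [a]) = M.eval (v ++ [a]) := by rw [eval_snoc, eval_snoc, h.1]
  obtain ⟨E, hE, huE, hvE⟩ := h.2
  exact ⟨hev, _, hE.snoc a huE hu, ⟨⟨u, huE, rfl⟩, hu⟩,
    ⟨⟨v, hvE, rfl⟩, mem_prefLang_of_eval_eq hev hu⟩⟩

def Sim (M : PDFA α σ) : List α → List α → Prop :=
  Relation.ReflTransGen M.Linked

theorem Sim.refl (u : List α) : M.Sim u u := Relation.ReflTransGen.refl

theorem Sim.trans {u v w : List α} (h : M.Sim u v) (h' : M.Sim v w) : M.Sim u w :=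
  Relation.ReflTransGen.trans h h'

theorem Linked.sim {u v : List α} (h : M.Linked u v) : M.Sim u v :=
  Relation.ReflTransGen.single h

theorem Sim.symm {u v : List α} (h : M.Sim u v) : M.Sim v u := by
  induction h with
  | refl => exact Sim.refl _
  | tail _ hl ih => exact hl.symm.sim.trans ih

theorem Sim.eval_eq {u v : List α} (h : M.Sim u v) : M.eval u = M.eval v := by
  induction h with
  | refl => rfl
  | tail _ hl ih => exact ih.trans hl.1

theorem Sim.mem_prefLang {u v : List α} (h : M.Sim u v) (hu : u ∈ M.prefLang) :
    v ∈ M.prefLang :=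
  mem_prefLang_of_eval_eq h.eval_eq hu

theorem Sim.snoc {u v : List α} (h : M.Sim u v) (a : α) (hu : u ++ [a] ∈ M.prefLang) :
    M.Sim (u ++ [a]) (v ++ [a]) := by
  induction h with
  | refl => exact Sim.refl _
  | tail _ hl ih => exact ih.trans (hl.snoc a (ih.mem_prefLang hu)).sim

theorem Sim.exists_isConvexEntangled_of_between {u v w : List α} (h : M.Sim u w)
    (hv : v ∈ M.prefLang) (hb : Between v u w) :
    ∃ E, M.IsConvexEntangled E ∧ v ∈ E ∧ ∃ y ∈ E, M.Sim u y := by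
  by_cases hvw : v = w
  · subst hvw
    exact ⟨{v}, isConvexEntangled_singleton hv, rfl, v, rfl, h⟩
  obtain ⟨a, c, hua, ⟨-, E, hE, haE, hcE⟩, hav, hcv⟩ :=
    h.exists_crossing (P := fun x => Between v x w) hb fun h => hvw h.eq_of_self
  exact ⟨E, hE, hE.mem_of_between haE hcE hv (hav.of_not_between hcv), a, haE, hua⟩

theorem Sim.of_between {u v w : List α} (h : M.Sim u w) (hv : v ∈ M.prefLang)
    (he : M.eval v = M.eval u) (hb : Between v u w) : M.Sim u v := by
  obtain ⟨E, hE, hvE, y, hyE, huy⟩ := h.exists_isConvexEntangled_of_between hv hb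
  exact huy.trans (Linked.sim ⟨huy.eval_eq.symm.trans he.symm, E, hE, hyE, hvE⟩)

theorem Sim.exists_isConvexEntangled_straddle {u w : List α} {P : List α → Prop}
    (h : M.Sim u w) (hu : P u) (hw : ¬ P w) :
    ∃ E, M.IsConvexEntangled E ∧ (∃ a ∈ E, P a) ∧ (∃ b ∈ E, ¬ P b) ∧ ∃ y ∈ E, M.Sim u y := by
  obtain ⟨a, c, hua, ⟨-, E, hE, haE, hcE⟩, ha, hc⟩ := h.exists_crossing hu hw
  exact ⟨E, hE, ⟨a, haE, ha⟩, ⟨c, hcE, hc⟩, a, haE, hua⟩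

end PDFA

theorem exists_seq_frequently {β ι : Type*} [Countable ι] [Nonempty ι] {r : β → β → Prop}
    {D : Set β} {P : ι → β → Prop} {x₀ : β} (hx₀ : x₀ ∈ D)
    (hstep : ∀ i, ∀ x ∈ D, ∃ y ∈ D, r x y ∧ P i y) :
    ∃ x : ℕ → β, (∀ n, x n ∈ D) ∧ (∀ n, r (x n) (x (n + 1))) ∧
      ∀ i n, ∃ m, n ≤ m ∧ P i (x m) := by
  obtain ⟨e, he⟩ := exists_surjective_nat ι
  choose f hfD hfr hfP using hstep
  -- At step `k` we move towards the label `e k.unpair.1`, so every label recurs forever.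
  let x : ℕ → D := fun n => Nat.rec ⟨x₀, hx₀⟩ (fun k y => ⟨f (e k.unpair.1) y y.2, hfD ..⟩) n
  refine ⟨fun n => (x n).1, fun n => (x n).2, fun n => hfr _ _ (x n).2, fun i n => ?_⟩
  obtain ⟨k, rfl⟩ := he i
  refine ⟨Nat.pair k n + 1, (Nat.right_le_pair k n).trans (Nat.le_succ _), ?_⟩
  convert hfP (e (Nat.pair k n).unpair.1) _ (x (Nat.pair k n)).2 using 2
  simp

theorem exists_window_of_monotone {β σ : Type*} [LinearOrder β] [Finite σ] {D : Set β}
    (f : β → Option σ) {u : ℕ → β} (hu : Monotone u) (huD : ∀ n, u n ∈ D) :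
    ∃ n, ∃ V ⊆ D, u n ∈ V ∧ u (n + 1) ∈ V ∧
      (∀ a ∈ V, ∀ c ∈ V, ∀ b ∈ D, a ≤ b → b ≤ c → b ∈ V) ∧
      ∃ x : ℕ → β, Monotone x ∧ (∀ i, x i ∈ V) ∧
        ∀ r, (∃ w ∈ V, f w = some r) → ∀ n, ∃ m, n ≤ m ∧ f (x m) = some r := by
  let A : Set σ := {r | ∀ i, ∃ w ∈ D, f w = some r ∧ ∃ j, u i ≤ w ∧ w ≤ u j}
  have hA : ∀ r ∉ A, ∃ i, ∀ w ∈ D, f w = some r → ∀ j, ¬ (u i ≤ w ∧ w ≤ u j) := by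
    intro r hr
    by_contra! h
    exact hr h
  choose! g hg using hA
  obtain ⟨N, hN⟩ := (Set.finite_range g).bddAbove
  -- Past `u N`, every state occurring in the windows `[u N, u j]` occurs in all later ones.
  let V : Set β := {w ∈ D | u N ≤ w ∧ ∃ j, w ≤ u j}
  have hVA : ∀ w ∈ V, ∀ r, f w = some r → r ∈ A := by
    rintro w ⟨hwD, hNw, j, hwj⟩ r hr
    by_contra hrA
    exact hg r hrA w hwD hr j ⟨(hu (hN ⟨r, rfl⟩)).trans hNw, hwj⟩
  have hNV : u N ∈ V := ⟨huD N, le_rfl, N, le_rfl⟩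
  refine ⟨N, V, fun w hw => hw.1, hNV, ⟨huD _, hu N.le_succ, N + 1, le_rfl⟩, ?_, ?_⟩
  · rintro a ⟨-, ha, -⟩ c ⟨-, -, j, hc⟩ b hb hab hbc
    exact ⟨hb, ha.trans hab, j, hbc.trans hc⟩
  cases isEmpty_or_nonempty σ
  · exact ⟨fun _ => u N, monotone_const, fun _ => hNV, fun r => isEmptyElim r⟩
  obtain ⟨x, hxV, hx, hxA⟩ := exists_seq_frequently (r := (· ≤ ·))
    (P := fun r w => r ∈ A → f w = some r) hNV fun r w ⟨hwD, hNw, j, hwj⟩ => by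
      by_cases hr : r ∈ A
      · obtain ⟨w', hw'D, hw'r, j', hjw', hw'j'⟩ := hr j
        exact ⟨w', ⟨hw'D, hNw.trans (hwj.trans hjw'), j', hw'j'⟩, hwj.trans hjw', fun _ => hw'r⟩
      · exact ⟨w, ⟨hwD, hNw, j, hwj⟩, le_rfl, fun h => absurd h hr⟩
  refine ⟨x, monotone_nat_of_le_succ hx, hxV, fun r ⟨w, hwV, hwr⟩ n => ?_⟩
  obtain ⟨m, hnm, hm⟩ := hxA r n
  exact ⟨m, hnm, hm (hVA w hwV r hwr)⟩

theorem exists_window {β σ : Type*} [LinearOrder β] [Finite σ] {D : Set β}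
    (f : β → Option σ) {u : ℕ → β} (hu : Monotone u ∨ Antitone u) (huD : ∀ n, u n ∈ D) :
    ∃ n, ∃ V ⊆ D, u n ∈ V ∧ u (n + 1) ∈ V ∧
      (∀ a ∈ V, ∀ c ∈ V, ∀ b ∈ D, a ≤ b → b ≤ c → b ∈ V) ∧
      ∃ x : ℕ → β, (Monotone x ∨ Antitone x) ∧ (∀ i, x i ∈ V) ∧
        ∀ r, (∃ w ∈ V, f w = some r) → ∀ n, ∃ m, n ≤ m ∧ f (x m) = some r := by
  rcases hu with hu | hu
  · obtain ⟨n, V, hVD, h₁, h₂, hV, x, hx, hxV, hxf⟩ := exists_window_of_monotone f hu huD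
    exact ⟨n, V, hVD, h₁, h₂, hV, x, Or.inl hx, hxV, hxf⟩
  · obtain ⟨n, V, hVD, h₁, h₂, hV, x, hx, hxV, hxf⟩ :=
      exists_window_of_monotone (β := βᵒᵈ) (D := D) f hu huD
    exact ⟨n, V, hVD, h₁, h₂, fun a ha c hc b hb hab hbc => hV c hc a ha b hb hbc hab, x,
      Or.inr hx, hxV, hxf⟩

namespace PDFA

variable {α σ : Type*} [LinearOrder α] {M : PDFA α σ}

theorem exists_linked_succ_of_monotoneColex [Finite σ] {u : ℕ → List α} {q : σ}
    (hu : ∀ i, u i ∈ M.I q) (hmono : MonotoneColex u) : ∃ n, M.Linked (u n) (u (n + 1)) := by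
  obtain ⟨n, V, hVD, h₁, h₂, hV, x, hx, hxV, hxf⟩ := exists_window
    (D := List.reverse ⁻¹' M.prefLang) (fun w => M.eval w.reverse) (u := fun i => (u i).reverse)
    hmono fun i => by simpa using (hu i).1
  have hE : M.IsConvexEntangled (List.reverse ⁻¹' V) :=
    ⟨fun w hw => by simpa using hVD hw,
      fun a b c ha hc hb hab hbc => hV _ ha _ hc _ (by simpa using hb) hab hbc,
      fun i => (x i).reverse, fun i => by simpa using hxV i,
      by simpa [MonotoneColex, Monotone, Antitone] using hx,
      fun r ⟨w, hw, hwr⟩ m => by simpa using hxf r ⟨_, hw, by simpa using hwr⟩ m⟩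
  exact ⟨n, by rw [(hu n).2, (hu (n + 1)).2], _, hE, by simpa using h₁, by simpa using h₂⟩

theorem exists_monotoneColex_subseq (x : ℕ → List α) :
    ∃ g : ℕ ↪o ℕ, MonotoneColex (x ∘ g) := by
  have : IsTrans (List α) fun a b => a.reverse ≤ b.reverse := ⟨fun _ _ _ => le_trans⟩
  obtain ⟨g, hg | hg⟩ := exists_increasing_or_nonincreasing_subseq
    (fun a b : List α => a.reverse ≤ b.reverse) x
  · exact ⟨g, Or.inl fun i j hij => hij.eq_or_lt.elim (fun h => h ▸ le_rfl) (hg i j)⟩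
  · exact ⟨g, Or.inr fun i j hij =>
      hij.eq_or_lt.elim (fun h => h ▸ le_rfl) fun h => (not_le.mp (hg i j h)).le⟩

theorem exists_lt_sim_of_forall_mem_I [Finite σ] {q : σ} (u : ℕ → List α)
    (hu : ∀ i, u i ∈ M.I q) : ∃ i j, i < j ∧ M.Sim (u i) (u j) := by
  obtain ⟨g, hg⟩ := exists_monotoneColex_subseq u
  obtain ⟨n, h⟩ := exists_linked_succ_of_monotoneColex (fun i => hu (g i)) hg
  exact ⟨g n, g (n + 1), g.strictMono n.lt_succ_self, h.sim⟩

variable (M) in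
def simSetoid : Setoid {w : List α // w ∈ M.prefLang} where
  r s t := M.Sim s t
  iseqv := ⟨fun s => Sim.refl s.1, Sim.symm, Sim.trans⟩

variable (M) in
def SimClass : Type _ := Quotient M.simSetoid

variable (M) in
def simClass (w : List α) (hw : w ∈ M.prefLang) : M.SimClass :=
  Quotient.mk M.simSetoid ⟨w, hw⟩

theorem simClass_eq_simClass_iff {w w' : List α} {hw : w ∈ M.prefLang}
    {hw' : w' ∈ M.prefLang} : M.simClass w hw = M.simClass w' hw' ↔ M.Sim w w' :=
  Quotient.eq

theorem simClass_out (c : M.SimClass) :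
    M.simClass (Quotient.out c).1 (Quotient.out c).2 = c :=
  Quotient.out_eq c

theorem finite_simClass [Finite σ] : Finite M.SimClass := by
  by_contra hinf
  rw [not_finite_iff_infinite] at hinf
  let s : M.SimClass → Option σ := fun c => M.eval (Quotient.out c).1
  obtain ⟨o, ho⟩ := Finite.exists_infinite_fiber s
  let c : ℕ ↪ s ⁻¹' {o} := Infinite.natEmbedding _
  have hc : ∀ n, (c n).1 = M.simClass (Quotient.out (c n).1).1 (Quotient.out (c n).1).2 :=
    fun n => (simClass_out _).symm
  obtain ⟨q, hq⟩ := exists_eval_eq_some_of_mem_prefLang (Quotient.out (c 0).1).2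
  obtain ⟨i, j, hij, hsim⟩ := exists_lt_sim_of_forall_mem_I (M := M) (q := q)
    (fun n => (Quotient.out (c n).1).1)
    fun n => ⟨(Quotient.out (c n).1).2, ((c n).2.trans (c 0).2.symm).trans hq⟩
  refine hij.ne (c.injective (Subtype.ext ?_))
  rw [hc i, hc j]
  exact simClass_eq_simClass_iff.mpr hsim

end PDFA

theorem exists_frequently_eq_of_frequently {γ : Type*} [Finite γ] (f : ℕ → γ) {P : ℕ → Prop}
    (h : ∀ n, ∃ i, n ≤ i ∧ P i) : ∃ c, ∀ n, ∃ i, n ≤ i ∧ P i ∧ f i = c := by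
  by_contra! hc
  have hev : ∀ᶠ i in Filter.atTop, ∀ c, P i → f i ≠ c :=
    Filter.eventually_all.2 fun c => Filter.eventually_atTop.2 (hc c)
  exact Filter.frequently_atTop.2 h (hev.mono fun i hi hP => hi (f i) hP rfl)

namespace PDFA

variable {α σ : Type*} [LinearOrder α] {M : PDFA α σ}

theorem MonotoneColex.between {x : ℕ → List α} (hx : MonotoneColex x) {i j k : ℕ}
    (hij : i ≤ j) (hjk : j ≤ k) : Between (x j) (x i) (x k) := by
  rcases hx with hx | hx
  · exact Or.inl ⟨hx i j hij, hx j k hjk⟩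
  · exact Or.inr ⟨hx j k hjk, hx i j hij⟩

variable (M) in
open Classical in
/-- The automaton `B'` of the theorem. -/
noncomputable def simQuotient (hε : [] ∈ M.prefLang) : PDFA α M.SimClass where
  step c a := Quotient.lift
    (fun w : {w // w ∈ M.prefLang} =>
      if h : w.1 ++ [a] ∈ M.prefLang then some (M.simClass _ h) else none)
    (fun s t hst => by
      have hiff : s.1 ++ [a] ∈ M.prefLang ↔ t.1 ++ [a] ∈ M.prefLang :=
        ⟨fun h => (hst.snoc a h).mem_prefLang h, fun h => (Sim.symm hst |>.snoc a h).mem_prefLang h⟩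
      by_cases hs : s.1 ++ [a] ∈ M.prefLang
      · rw [dif_pos hs, dif_pos (hiff.mp hs)]
        exact congrArg some (simClass_eq_simClass_iff.mpr (Sim.snoc hst a hs))
      · rw [dif_neg hs, dif_neg (hiff.not.mp hs)]) c
  start := M.simClass [] hε
  accept := {c | Quotient.lift (fun w : {w // w ∈ M.prefLang} => w.1 ∈ M.language)
    (fun s t hst => by simp [language, Sim.eval_eq hst]) c}

variable (hε : [] ∈ M.prefLang)

open Classical in
theorem simQuotient_eval (w : List α) : (M.simQuotient hε).eval w =
    if h : w ∈ M.prefLang then some (M.simClass w h) else none := by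
  induction w using List.reverseRecOn with
  | nil => rw [dif_pos hε]; rfl
  | append_singleton w a ih =>
    rw [eval_snoc, ih]
    by_cases hw : w ∈ M.prefLang
    · rw [dif_pos hw]
      rfl
    · rw [dif_neg hw, dif_neg fun h => hw (mem_prefLang_of_append_mem h)]
      rfl

theorem simQuotient_eval_eq_some_iff {w : List α} {c : M.SimClass} :
    (M.simQuotient hε).eval w = some c ↔ ∃ h : w ∈ M.prefLang, M.simClass w h = c := by
  rw [simQuotient_eval]
  split_ifs with h <;> simp [h]

theorem simQuotient_eval_of_mem {w : List α} (hw : w ∈ M.prefLang) :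
    (M.simQuotient hε).eval w = some (M.simClass w hw) :=
  (simQuotient_eval_eq_some_iff hε).mpr ⟨hw, rfl⟩

theorem language_simQuotient : (M.simQuotient hε).language = M.language := by
  ext w
  constructor
  · rintro ⟨c, hc, hacc⟩
    obtain ⟨hw, rfl⟩ := (simQuotient_eval_eq_some_iff hε).mp hc
    exact hacc
  · intro hw
    exact ⟨_, simQuotient_eval_of_mem hε (mem_prefLang_of_mem_language hw), hw⟩

theorem prefLang_simQuotient : (M.simQuotient hε).prefLang = M.prefLang := by
  unfold prefLang
  rw [language_simQuotient]

theorem simQuotient_trim : (M.simQuotient hε).Trim := by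
  refine ⟨fun c => Quotient.inductionOn c fun s => ⟨s.1, simQuotient_eval_of_mem hε s.2⟩,
    fun c => Quotient.inductionOn c fun s => ?_⟩
  obtain ⟨v, hv⟩ := s.2
  have hsv := simQuotient_eval_of_mem hε (mem_prefLang_of_mem_language hv)
  rw [eval_append, simQuotient_eval_of_mem hε s.2] at hsv
  exact ⟨v, _, hsv, hv⟩

theorem eval_eq_of_simQuotient_eval {w : List α} {c : M.SimClass}
    (h : (M.simQuotient hε).eval w = some c) : M.eval w = M.eval (Quotient.out c).1 := by
  obtain ⟨hw, rfl⟩ := (simQuotient_eval_eq_some_iff hε).mp h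
  exact (Quotient.mk_out (s := M.simSetoid) ⟨w, hw⟩).eval_eq.symm

theorem exists_entangledStates_simQuotient [Finite σ] {S : Finset σ}
    (hS : M.EntangledStates ↑S) :
    ∃ T : Finset M.SimClass, T.card = S.card ∧ (M.simQuotient hε).EntangledStates ↑T := by
  classical
  have : Finite M.SimClass := finite_simClass
  have : Nonempty M.SimClass := ⟨M.simClass [] hε⟩
  obtain ⟨x, hxP, hxm, hxh⟩ := hS
  -- Each state of `S` is visited infinitely often inside a single class.
  choose! F hF using fun q (hq : q ∈ S) =>
    exists_frequently_eq_of_frequently (fun i => M.simClass (x i) (hxP i)) (hxh q hq)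
  have hinj : Set.InjOn F S := by
    intro q hq q' hq' he
    obtain ⟨i, -, hi, hFi⟩ := hF q hq 0
    obtain ⟨j, -, hj, hFj⟩ := hF q' hq' 0
    have hsim := simClass_eq_simClass_iff.mp (hFi.trans (he.trans hFj.symm))
    simpa [hi, hj] using hsim.eval_eq
  refine ⟨S.image F, Finset.card_image_of_injOn hinj, x,
    fun i => (prefLang_simQuotient hε).symm ▸ hxP i, hxm, ?_⟩
  simp only [Finset.coe_image, Set.forall_mem_image]
  intro q hq n
  obtain ⟨i, hi, -, hFi⟩ := hF q hq n
  exact ⟨i, hi, hFi ▸ simQuotient_eval_of_mem hε (hxP i)⟩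

theorem exists_entangledStates_of_simQuotient {T : Finset M.SimClass}
    (hT : (M.simQuotient hε).EntangledStates ↑T) :
    ∃ S : Finset σ, S.card = T.card ∧ M.EntangledStates ↑S := by
  classical
  obtain ⟨x, hxP, hxm, hxh⟩ := hT
  rw [prefLang_simQuotient] at hxP
  choose st hst using fun c : M.SimClass =>
    exists_eval_eq_some_of_mem_prefLang (Quotient.out c).2
  have hevst {i : ℕ} {c : M.SimClass} (h : (M.simQuotient hε).eval (x i) = some c) :
      M.eval (x i) = some (st c) :=
    (eval_eq_of_simQuotient_eval hε h).trans (hst c)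
  -- Two classes of `T` with the same state would be interleaved along `x`, contradicting
  -- the convexity of classes within a state.
  have hinj : Set.InjOn st T := by
    intro c hc c' hc' he
    obtain ⟨i, -, hi⟩ := hxh c hc 0
    obtain ⟨j, hij, hj⟩ := hxh c' hc' i
    obtain ⟨k, hjk, hk⟩ := hxh c hc j
    obtain ⟨_, hci⟩ := (simQuotient_eval_eq_some_iff hε).mp hi
    obtain ⟨_, hcj⟩ := (simQuotient_eval_eq_some_iff hε).mp hj
    obtain ⟨_, hck⟩ := (simQuotient_eval_eq_some_iff hε).mp hk
    have hik : M.Sim (x i) (x k) := simClass_eq_simClass_iff.mp (hci.trans hck.symm)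
    have hij' : M.Sim (x i) (x j) := hik.of_between (hxP j)
      (by rw [hevst hi, hevst hj, he]) (hxm.between hij hjk)
    exact hci.symm.trans ((simClass_eq_simClass_iff.mpr hij').trans hcj)
  refine ⟨T.image st, Finset.card_image_of_injOn hinj, x, hxP, hxm, ?_⟩
  simp only [Finset.coe_image, Set.forall_mem_image]
  intro c hc n
  obtain ⟨i, hi, hev⟩ := hxh c hc n
  exact ⟨i, hi, hevst hev⟩

theorem ent_simQuotient [Fintype σ] [Fintype M.SimClass] :
    (M.simQuotient hε).ent = M.ent := by
  unfold ent
  congr 1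
  ext n
  constructor
  · rintro ⟨T, rfl, hT⟩
    obtain ⟨S, hS, hSe⟩ := exists_entangledStates_of_simQuotient hε hT
    exact ⟨S, hS, hSe⟩
  · rintro ⟨S, rfl, hS⟩
    exact exists_entangledStates_simQuotient hε hS

end PDFA

namespace PDFA

variable {α σ : Type*} [LinearOrder α] {M : PDFA α σ}

theorem EntangledStates.isColexAntichain {S : Set σ} (h : M.EntangledStates S) :
    M.IsColexAntichain S := by
  obtain ⟨x, hxP, hxm, hxh⟩ := h
  have key : ∀ r₁ ∈ S, ∀ r₂ ∈ S, ¬ M.stateLt r₁ r₂ := by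
    rintro r₁ hr₁ r₂ hr₂ ⟨-, hlt⟩
    rcases hxm with hm | hm
    · obtain ⟨i, -, hi⟩ := hxh r₂ hr₂ 0
      obtain ⟨j, hij, hj⟩ := hxh r₁ hr₁ i
      exact (hm i j hij).not_gt (hlt (x j) ⟨hxP j, hj⟩ (x i) ⟨hxP i, hi⟩)
    · obtain ⟨i, -, hi⟩ := hxh r₁ hr₁ 0
      obtain ⟨j, hij, hj⟩ := hxh r₂ hr₂ i
      exact (hm i j hij).not_gt (hlt (x i) ⟨hxP i, hi⟩ (x j) ⟨hxP j, hj⟩)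
  exact fun q₁ h₁ q₂ h₂ _ => ⟨key q₁ h₁ q₂ h₂, key q₂ h₂ q₁ h₁⟩

variable (M) in
def classOf (u : List α) : Set (List α) := {w | w ∈ M.prefLang ∧ M.Sim u w}

theorem mem_classOf_self {u : List α} (hu : u ∈ M.prefLang) : u ∈ M.classOf u :=
  ⟨hu, Sim.refl u⟩

theorem classOf_eq_of_sim {u v : List α} (h : M.Sim u v) : M.classOf u = M.classOf v := by
  ext w
  exact ⟨fun hw => ⟨hw.1, h.symm.trans hw.2⟩, fun hw => ⟨hw.1, h.trans hw.2⟩⟩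

theorem eval_eq_of_mem_classOf {u w : List α} (h : w ∈ M.classOf u) : M.eval w = M.eval u :=
  h.2.eval_eq.symm

/-- A point of the co-lex line: a cut, given as the lower set of the reversals of the words
below it, approached from below (`false`) or from above (`true`). -/
abbrev Point (α : Type*) [LinearOrder α] := LowerSet (List α) ×ₗ Bool

/-- `d` accumulates at `p`. From above, a minimum of the upper side of the cut counts as an
accumulation point; from below, only a proper limit does. -/
def AccAt (d : Set (List α)) (p : Point α) : Prop :=
  match ofLex p with
  | (γ, false) => (∃ z ∈ d, z.reverse ∈ γ) ∧ ∀ v ∈ γ, ∃ z ∈ d, z.reverse ∈ γ ∧ v < z.reverse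
  | (γ, true) => (∃ z ∈ d, z.reverse ∉ γ) ∧ ∀ v ∉ γ, ∃ z ∈ d, z.reverse ∉ γ ∧ z.reverse ≤ v

theorem exists_accAt_of_nonempty {d : Set (List α)} (hd : d.Nonempty) : ∃ p, AccAt d p := by
  refine ⟨toLex ((upperClosure (List.reverse '' d)).compl, true), ?_, fun v hv => ?_⟩
  · obtain ⟨z, hz⟩ := hd
    exact ⟨z, hz, by simpa using ⟨z, hz, le_rfl⟩⟩
  · obtain ⟨z, hz, hzv⟩ : ∃ z ∈ d, z.reverse ≤ v := by simpa using hv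
    exact ⟨z, hz, by simpa using ⟨z, hz, le_rfl⟩, hzv⟩

theorem MonotoneColex.exists_accAt {x : ℕ → List α} (hx : MonotoneColex x)
    (hne : ∀ n, ∃ m, n ≤ m ∧ x m ≠ x n) :
    ∃ p : Point α, ∀ d : Set (List α), (∀ n, ∃ m, n ≤ m ∧ x m ∈ d) → AccAt d p := by
  rcases hx with hx | hx
  · refine ⟨toLex (lowerClosure (Set.range fun i => (x i).reverse), false), fun d hd => ?_⟩
    have hmem : ∀ i, (x i).reverse ∈ lowerClosure (Set.range fun i => (x i).reverse) :=
      fun i => subset_lowerClosure ⟨i, rfl⟩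
    refine ⟨?_, fun v hv => ?_⟩
    · obtain ⟨m, -, hm⟩ := hd 0
      exact ⟨x m, hm, hmem m⟩
    · obtain ⟨_, ⟨i, rfl⟩, hvi⟩ := mem_lowerClosure.mp hv
      obtain ⟨j, hij, hji⟩ := hne i
      obtain ⟨m, hjm, hm⟩ := hd j
      have hlt : (x i).reverse < (x j).reverse :=
        (hx i j hij).lt_of_ne fun h => hji (List.reverse_injective h).symm
      exact ⟨x m, hm, hmem m, hvi.trans_lt (hlt.trans_le (hx j m hjm))⟩
  · refine ⟨toLex ((upperClosure (Set.range fun i => (x i).reverse)).compl, true),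
      fun d hd => ⟨?_, fun v hv => ?_⟩⟩
    · obtain ⟨m, -, hm⟩ := hd 0
      exact ⟨x m, hm, by simpa using ⟨m, le_rfl⟩⟩
    · obtain ⟨i, hiv⟩ : ∃ i, (x i).reverse ≤ v := by simpa using hv
      obtain ⟨m, him, hm⟩ := hd i
      exact ⟨x m, hm, by simpa using ⟨m, le_rfl⟩, (hx i m him).trans hiv⟩

theorem IsConvexEntangled.exists_accAt_classOf {E : Set (List α)} (hE : M.IsConvexEntangled E)
    {z₁ z₂ : List α} (hz₁ : z₁ ∈ E) (hz₂ : z₂ ∈ E) (hne : M.eval z₁ ≠ M.eval z₂) :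
    ∃ p, ∀ z ∈ E, AccAt (M.classOf z) p := by
  obtain ⟨hEP, -, x, hxE, hxm, hxh⟩ := id hE
  have hhit : ∀ z ∈ E, ∀ n, ∃ m, n ≤ m ∧ M.eval (x m) = M.eval z := by
    intro z hz n
    obtain ⟨q, hq⟩ := exists_eval_eq_some_of_mem_prefLang (hEP hz)
    obtain ⟨m, hm, h⟩ := hxh q ⟨z, hz, hq⟩ n
    exact ⟨m, hm, h.trans hq.symm⟩
  obtain ⟨p, hp⟩ := hxm.exists_accAt fun n => by
    obtain ⟨m₁, h₁, e₁⟩ := hhit z₁ hz₁ n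
    obtain ⟨m₂, h₂, e₂⟩ := hhit z₂ hz₂ n
    by_contra! h
    exact hne (by rw [← e₁, ← e₂, h m₁ h₁, h m₂ h₂])
  refine ⟨p, fun z hz => hp _ fun n => ?_⟩
  obtain ⟨m, hm, he⟩ := hhit z hz n
  exact ⟨m, hm, hEP (hxE m), Linked.sim ⟨he.symm, E, hE, hz, hxE m⟩⟩

end PDFA

namespace PDFA

variable {α σ : Type*} [LinearOrder α] {M : PDFA α σ}

theorem AccAt.exists_mem_of_lt {d : Set (List α)} {p : Point α} (hd : AccAt d p)
    {γ : LowerSet (List α)} {s : Bool} (hlt : p < toLex (γ, s)) :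
    ∃ z ∈ d, z.reverse ∈ γ := by
  obtain ⟨γ₁, s₁⟩ := p
  rcases Prod.Lex.toLex_lt_toLex.mp hlt with hγ | ⟨rfl, hs⟩
  · cases s₁
    · obtain ⟨z, hz, hzγ⟩ := hd.1
      exact ⟨z, hz, hγ.le hzγ⟩
    · obtain ⟨w, hwγ, hwγ₁⟩ := Set.exists_of_ssubset (LowerSet.coe_ssubset_coe.mpr hγ)
      obtain ⟨z, hz, -, hzw⟩ := hd.2 w hwγ₁
      exact ⟨z, hz, γ.lower hzw hwγ⟩
  · obtain rfl : s₁ = false := (Bool.lt_iff.mp hs).1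
    exact hd.1

theorem AccAt.exists_not_mem_of_gt {d : Set (List α)} {p : Point α} (hd : AccAt d p)
    {γ : LowerSet (List α)} {s : Bool} (hlt : toLex (γ, s) < p) :
    ∃ z ∈ d, z.reverse ∉ γ := by
  obtain ⟨γ₂, s₂⟩ := p
  rcases Prod.Lex.toLex_lt_toLex.mp hlt with hγ | ⟨rfl, hs⟩
  · cases s₂
    · obtain ⟨w, hwγ₂, hwγ⟩ := Set.exists_of_ssubset (LowerSet.coe_ssubset_coe.mpr hγ)
      obtain ⟨z, hz, -, hwz⟩ := hd.2 w hwγ₂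
      exact ⟨z, hz, fun hzγ => hwγ (γ.lower hwz.le hzγ)⟩
    · obtain ⟨z, hz, hzγ⟩ := hd.1
      exact ⟨z, hz, fun h => hzγ (hγ.le h)⟩
  · obtain rfl : s₂ = true := (Bool.lt_iff.mp hs).2
    exact hd.1

theorem AccAt.exists_mem_of_convexIn {d : Set (List α)} {γ : LowerSet (List α)} {s : Bool}
    (hd : AccAt d (toLex (γ, s))) (hdP : d ⊆ M.prefLang) {E : Set (List α)}
    (hE : M.ConvexIn E) {a b : List α} (ha : a ∈ E) (haγ : a.reverse ∈ γ) (hb : b ∈ E)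
    (hbγ : b.reverse ∉ γ) : ∃ z ∈ d, z ∈ E := by
  cases s
  · obtain ⟨z, hz, hzγ, haz⟩ := hd.2 _ haγ
    exact ⟨z, hz, hE ha hb (hdP hz) haz.le (le_of_not_gt fun h => hbγ (γ.lower h.le hzγ))⟩
  · obtain ⟨z, hz, hzγ, hzb⟩ := hd.2 _ hbγ
    exact ⟨z, hz, hE ha hb (hdP hz) (le_of_not_gt fun h => hzγ (γ.lower h.le haγ)) hzb⟩

theorem exists_accAt_classOf_of_lt_of_lt {u : List α} {p₁ p₂ q : Point α}
    (h₁ : AccAt (M.classOf u) p₁) (h₂ : AccAt (M.classOf u) p₂) (l₁ : p₁ < q) (l₂ : q < p₂) :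
    ∃ p, AccAt (M.classOf u) p ∧ ∀ v, AccAt (M.classOf v) q → AccAt (M.classOf v) p := by
  obtain ⟨γ, s⟩ := q
  -- The class of `u` straddles the cut of `q`, hence so does a convex entangled set `E` meeting
  -- it, and `E` meets every class accumulating at `q`.
  obtain ⟨z₁, hz₁, hz₁γ⟩ := h₁.exists_mem_of_lt l₁
  obtain ⟨z₂, hz₂, hz₂γ⟩ := h₂.exists_not_mem_of_gt l₂
  obtain ⟨E, hE, ⟨a, haE, haγ⟩, ⟨b, hbE, hbγ⟩, y, hyE, hz₁y⟩ :=
    (hz₁.2.symm.trans hz₂.2).exists_isConvexEntangled_straddle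
      (P := fun w => w.reverse ∈ γ) hz₁γ hz₂γ
  have huy : M.Sim u y := hz₁.2.trans hz₁y
  have hcapture : ∀ v, AccAt (M.classOf v) (toLex (γ, s)) → ∃ z ∈ M.classOf v, z ∈ E :=
    fun v hv => hv.exists_mem_of_convexIn (fun _ h => h.1) hE.2.1 haE haγ hbE hbγ
  by_cases hex : ∃ v, AccAt (M.classOf v) (toLex (γ, s)) ∧ M.eval v ≠ M.eval u
  · -- `E` then carries two states, so all the classes it meets accumulate at one point.
    obtain ⟨v, hv, hvu⟩ := hex
    obtain ⟨zv, hzv, hzvE⟩ := hcapture v hv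
    obtain ⟨p, hp⟩ := hE.exists_accAt_classOf hzvE hyE
      (by rwa [eval_eq_of_mem_classOf hzv, ← huy.eval_eq])
    refine ⟨p, classOf_eq_of_sim huy ▸ hp y hyE, fun v' hv' => ?_⟩
    obtain ⟨z, hz, hzE⟩ := hcapture v' hv'
    exact classOf_eq_of_sim hz.2 ▸ hp z hzE
  · -- Otherwise every class accumulating at `q` meets `E` in the state of `u`, so it is the
    -- class of `u`.
    push Not at hex
    refine ⟨p₁, h₁, fun v hv => ?_⟩
    obtain ⟨z, hz, hzE⟩ := hcapture v hv
    have hyz : M.Linked y z :=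
      ⟨by rw [eval_eq_of_mem_classOf hz, hex v hv, huy.eval_eq], E, hE, hyE, hzE⟩
    rwa [classOf_eq_of_sim hz.2, ← classOf_eq_of_sim hyz.sim, ← classOf_eq_of_sim huy]

variable (M) in
def Interleaved (u v : List α) : Prop :=
  (∃ x ∈ M.classOf u, ∃ y ∈ M.classOf v, y.reverse ≤ x.reverse) ∧
    ∃ x ∈ M.classOf u, ∃ y ∈ M.classOf v, x.reverse ≤ y.reverse

theorem exists_accAt_classOf_of_between {u v β x₁ x₂ : List α} (huv : ¬ M.Sim u v)
    (hβ : β ∈ M.classOf v) (hx₁ : x₁ ∈ M.classOf u) (hx₂ : x₂ ∈ M.classOf u)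
    (hb : Between β x₁ x₂) : ∃ p, AccAt (M.classOf u) p ∧ AccAt (M.classOf v) p := by
  have hx₁₂ : M.Sim x₁ x₂ := hx₁.2.symm.trans hx₂.2
  have hne : M.eval u ≠ M.eval v := fun he =>
    huv ((hx₁.2.trans (hx₁₂.of_between hβ.1 (by
      rw [eval_eq_of_mem_classOf hβ, eval_eq_of_mem_classOf hx₁, he]) hb)).trans hβ.2.symm)
  obtain ⟨E, hE, hβE, y, hyE, hx₁y⟩ := hx₁₂.exists_isConvexEntangled_of_between hβ.1 hb
  have huy : M.Sim u y := hx₁.2.trans hx₁y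
  obtain ⟨p, hp⟩ := hE.exists_accAt_classOf hyE hβE
    (by rwa [eval_eq_of_mem_classOf hβ, ← huy.eval_eq])
  exact ⟨p, classOf_eq_of_sim huy ▸ hp y hyE, classOf_eq_of_sim hβ.2 ▸ hp β hβE⟩

theorem Interleaved.exists_accAt {u v : List α} (h : M.Interleaved u v) (huv : ¬ M.Sim u v) :
    ∃ p, AccAt (M.classOf u) p ∧ AccAt (M.classOf v) p := by
  obtain ⟨⟨x₁, hx₁, y₁, hy₁, h₁⟩, ⟨x₂, hx₂, y₂, hy₂, h₂⟩⟩ := h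
  rcases le_total x₂.reverse y₁.reverse with h | h
  · exact exists_accAt_classOf_of_between huv hy₁ hx₂ hx₁ (Or.inl ⟨h, h₁⟩)
  · obtain ⟨p, hv, hu⟩ := exists_accAt_classOf_of_between (fun h => huv h.symm) hx₂ hy₁ hy₂
      (Or.inl ⟨h, h₂⟩)
    exact ⟨p, hu, hv⟩

theorem exists_accAt_of_forall_erase {C : Finset (List α)}
    (hC : 3 ≤ C.card) (pt : List α → Point α)
    (hpt : ∀ w ∈ C, ∀ u ∈ C.erase w, AccAt (M.classOf u) (pt w)) :
    ∃ p, ∀ u ∈ C, AccAt (M.classOf u) p := by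
  have hcoinc : ∀ w ∈ C, ∀ w' ∈ C, w ≠ w' → pt w = pt w' →
      ∀ u ∈ C, AccAt (M.classOf u) (pt w) := by
    intro w hw w' hw' hne he u hu
    by_cases huw : u = w
    · subst huw
      exact he ▸ hpt w' hw' u (Finset.mem_erase.mpr ⟨hne, hu⟩)
    · exact hpt w hw u (Finset.mem_erase.mpr ⟨huw, hu⟩)
  have hCne : C.Nonempty := Finset.card_pos.mp (by omega)
  obtain ⟨a, ha, hamin⟩ := C.exists_min_image pt hCne
  obtain ⟨b, hb, hbmax⟩ := C.exists_max_image pt hCne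
  obtain ⟨m, hm⟩ : ((C.erase a).erase b).Nonempty := by
    rw [← Finset.card_pos]
    have h₁ := Finset.pred_card_le_card_erase (s := C) (a := a)
    have h₂ := Finset.pred_card_le_card_erase (s := C.erase a) (a := b)
    omega
  have hma : m ≠ a := Finset.ne_of_mem_erase (Finset.mem_of_mem_erase hm)
  have hmb : m ≠ b := Finset.ne_of_mem_erase hm
  have hmC : m ∈ C := Finset.mem_of_mem_erase (Finset.mem_of_mem_erase hm)
  rcases (hamin m hmC).eq_or_lt with he | hlt₁
  · exact ⟨pt a, hcoinc a ha m hmC hma.symm he⟩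
  rcases (hbmax m hmC).eq_or_lt with he | hlt₂
  · exact ⟨pt m, hcoinc m hmC b hb hmb he⟩
  obtain ⟨p, hpm, hp⟩ := exists_accAt_classOf_of_lt_of_lt
    (hpt a ha m (Finset.mem_erase.mpr ⟨hma, hmC⟩)) (hpt b hb m (Finset.mem_erase.mpr ⟨hmb, hmC⟩))
    hlt₁ hlt₂
  refine ⟨p, fun u hu => ?_⟩
  by_cases hum : u = m
  · exact hum ▸ hpm
  · exact hp u (hpt m hmC u (Finset.mem_erase.mpr ⟨hum, hu⟩))

theorem exists_accAt_of_pairwise_interleaved (C : Finset (List α)) (hC : C.Nonempty)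
    (hCP : ∀ u ∈ C, u ∈ M.prefLang)
    (hpair : (C : Set (List α)).Pairwise fun u v => ¬ M.Sim u v ∧ M.Interleaved u v) :
    ∃ p, ∀ u ∈ C, AccAt (M.classOf u) p := by
  induction C using Finset.strongInduction with
  | H C ih =>
  rcases Nat.lt_or_ge C.card 3 with hcard | hcard
  · rcases (show C.card = 1 ∨ C.card = 2 by have := hC.card_pos; omega) with h | h
    · obtain ⟨u, rfl⟩ := Finset.card_eq_one.mp h
      obtain ⟨p, hp⟩ := exists_accAt_of_nonempty ⟨u, mem_classOf_self (hCP u (by simp))⟩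
      exact ⟨p, by simpa using hp⟩
    · obtain ⟨u, v, huv, rfl⟩ := Finset.card_eq_two.mp h
      obtain ⟨hsim, hint⟩ := hpair (by simp) (by simp) huv
      obtain ⟨p, hpu, hpv⟩ := hint.exists_accAt hsim
      exact ⟨p, by simp [hpu, hpv]⟩
  have : Nonempty (Point α) := ⟨toLex (⊥, false)⟩
  choose! pt hpt using fun w (hw : w ∈ C) => ih (C.erase w) (Finset.erase_ssubset hw)
    (Finset.Nontrivial.erase_nonempty (Finset.one_lt_card_iff_nontrivial.mp (by omega)))
    (fun u hu => hCP u (Finset.mem_of_mem_erase hu))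
    (hpair.mono (by simp [Finset.coe_erase]))
  exact exists_accAt_of_forall_erase hcard pt hpt

end PDFA

namespace PDFA

variable {α σ : Type*} [LinearOrder α] {M : PDFA α σ}

theorem exists_monotoneColex_of_accAt {ι : Type*} [Countable ι] [Nonempty ι]
    {d : ι → Set (List α)} {p : Point α} (hd : ∀ i, AccAt (d i) p) :
    ∃ x : ℕ → List α, MonotoneColex x ∧ (∀ n, ∃ i, x n ∈ d i) ∧
      ∀ i n, ∃ m, n ≤ m ∧ x m ∈ d i := by
  obtain ⟨γ, s⟩ := p
  obtain ⟨i₀⟩ := ‹Nonempty ι›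
  cases s
  · obtain ⟨z₀, hz₀, hz₀γ⟩ := (hd i₀).1
    obtain ⟨x, hxD, hx, hxd⟩ := exists_seq_frequently
      (r := fun a b : List α => a.reverse ≤ b.reverse) (D := {z | z.reverse ∈ γ ∧ ∃ i, z ∈ d i})
      (P := fun i z => z ∈ d i) ⟨hz₀γ, i₀, hz₀⟩ fun i z hz => by
        obtain ⟨z', hz', hz'γ, hlt⟩ := (hd i).2 _ hz.1
        exact ⟨z', ⟨hz'γ, i, hz'⟩, hlt.le, hz'⟩
    exact ⟨x, Or.inl (monotone_nat_of_le_succ (f := fun n => (x n).reverse) hx),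
      fun n => (hxD n).2, hxd⟩
  · obtain ⟨z₀, hz₀, hz₀γ⟩ := (hd i₀).1
    obtain ⟨x, hxD, hx, hxd⟩ := exists_seq_frequently
      (r := fun a b : List α => b.reverse ≤ a.reverse) (D := {z | z.reverse ∉ γ ∧ ∃ i, z ∈ d i})
      (P := fun i z => z ∈ d i) ⟨hz₀γ, i₀, hz₀⟩ fun i z hz => by
        obtain ⟨z', hz', hz'γ, hle⟩ := (hd i).2 _ hz.1
        exact ⟨z', ⟨hz'γ, i, hz'⟩, hle, hz'⟩
    exact ⟨x, Or.inr (antitone_nat_of_succ_le (f := fun n => (x n).reverse) hx),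
      fun n => (hxD n).2, hxd⟩

variable (hε : [] ∈ M.prefLang)

theorem I_simQuotient (c : M.SimClass) :
    (M.simQuotient hε).I c = M.classOf (Quotient.out c).1 := by
  ext w
  change w ∈ (M.simQuotient hε).prefLang ∧ _ ↔ _
  rw [prefLang_simQuotient, simQuotient_eval_eq_some_iff]
  constructor
  · rintro ⟨hw, _, rfl⟩
    exact ⟨hw, Quotient.mk_out (s := M.simSetoid) ⟨w, hw⟩⟩
  · rintro ⟨hw, hsim⟩
    refine ⟨hw, hw, ?_⟩
    rw [← simClass_out c]
    exact simClass_eq_simClass_iff.mpr hsim.symm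

theorem IsColexAntichain.interleaved_simQuotient {T : Set M.SimClass}
    (hT : (M.simQuotient hε).IsColexAntichain T) {c c' : M.SimClass} (hc : c ∈ T)
    (hc' : c' ∈ T) (hne : c ≠ c') :
    M.Interleaved (Quotient.out c).1 (Quotient.out c').1 := by
  have key : ∀ {c c'}, c ∈ T → c' ∈ T → c ≠ c' → ∃ x ∈ M.classOf (Quotient.out c).1,
      ∃ y ∈ M.classOf (Quotient.out c').1, y.reverse ≤ x.reverse := by
    intro c c' hc hc' hne
    have h := (hT c hc c' hc' hne).1
    simp only [stateLt, I_simQuotient, not_and, not_forall, not_lt] at h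
    obtain ⟨x, hx, y, hy, hyx⟩ := h hne
    exact ⟨x, hx, y, hy, hyx⟩
  obtain ⟨x, hx, y, hy, h⟩ := key hc' hc hne.symm
  exact ⟨key hc hc' hne, y, hy, x, hx, h⟩

theorem IsColexAntichain.entangledStates_simQuotient {T : Finset M.SimClass}
    (hT : (M.simQuotient hε).IsColexAntichain ↑T) : (M.simQuotient hε).EntangledStates ↑T := by
  classical
  rcases T.eq_empty_or_nonempty with rfl | hTne
  · exact ⟨fun _ => [], fun _ => (prefLang_simQuotient hε).symm ▸ hε,
      Or.inl fun _ _ _ => le_rfl, by simp⟩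
  let rep : M.SimClass → List α := fun c => (Quotient.out c).1
  obtain ⟨p, hp⟩ := exists_accAt_of_pairwise_interleaved (M := M) (T.image rep) (hTne.image rep)
    (by simp only [Finset.mem_image]; rintro _ ⟨c, -, rfl⟩; exact (Quotient.out c).2) (by
      simp only [Finset.coe_image]
      rintro _ ⟨c, hc, rfl⟩ _ ⟨c', hc', rfl⟩ hne
      have hcc : c ≠ c' := fun h => hne (h ▸ rfl)
      refine ⟨fun h => hcc ?_, hT.interleaved_simQuotient hε hc hc' hcc⟩
      rw [← simClass_out c, ← simClass_out c']
      exact simClass_eq_simClass_iff.mpr h)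
  have : Nonempty T := hTne.to_subtype
  obtain ⟨x, hxm, hxd, hx⟩ := exists_monotoneColex_of_accAt (ι := T)
    (d := fun c => M.classOf (rep c)) fun c => hp _ (Finset.mem_image_of_mem rep c.2)
  refine ⟨x, fun n => ?_, hxm, fun c hc n => ?_⟩
  · obtain ⟨c, hc⟩ := hxd n
    rw [prefLang_simQuotient]
    exact hc.1
  · obtain ⟨m, hm, hxc⟩ := hx ⟨c, hc⟩ n
    rw [← I_simQuotient hε] at hxc
    exact ⟨m, hm, hxc.2⟩

theorem width_simQuotient [Fintype M.SimClass] :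
    (M.simQuotient hε).width = (M.simQuotient hε).ent := by
  unfold width ent
  congr 1
  ext n
  exact ⟨fun ⟨T, hT, h⟩ => ⟨T, hT, h.entangledStates_simQuotient hε⟩,
    fun ⟨T, hT, h⟩ => ⟨T, hT, h.isColexAntichain⟩⟩

end PDFA

theorem setOf_card_eq_of_equiv {τ τ' : Type*} (e : τ ≃ τ') {P : Set τ → Prop}
    {P' : Set τ' → Prop} (h : ∀ S, P' (e '' S) ↔ P S) :
    {n | ∃ S : Finset τ', S.card = n ∧ P' ↑S} = {n | ∃ S : Finset τ, S.card = n ∧ P ↑S} := by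
  ext n
  constructor
  · rintro ⟨S', rfl, hS'⟩
    refine ⟨S'.map e.symm.toEmbedding, by simp, (h _).mp ?_⟩
    convert hS'
    ext
    simp
  · rintro ⟨S, rfl, hS⟩
    exact ⟨S.map e.toEmbedding, by simp, by simpa using (h S).mpr hS⟩

namespace PDFA

variable {α τ τ' : Type*}

def reindex (N : PDFA α τ) (e : τ ≃ τ') : PDFA α τ' where
  step s a := (N.step (e.symm s) a).map e
  start := e N.start
  accept := e.symm ⁻¹' N.accept

variable (N : PDFA α τ) (e : τ ≃ τ')

theorem evalFrom_reindex (q : τ) (w : List α) :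
    (N.reindex e).evalFrom (e q) w = (N.evalFrom q w).map e := by
  induction w generalizing q with
  | nil => rfl
  | cons a w ih =>
    simp only [evalFrom, reindex, Equiv.symm_apply_apply]
    rcases N.step q a with _ | p
    · rfl
    · exact ih p

theorem eval_reindex (w : List α) : (N.reindex e).eval w = (N.eval w).map e :=
  N.evalFrom_reindex e N.start w

theorem eval_reindex_eq_some_iff {w : List α} {q : τ} :
    (N.reindex e).eval w = some (e q) ↔ N.eval w = some q := by
  simp [eval_reindex]

theorem mem_accept_reindex {q : τ} : e q ∈ (N.reindex e).accept ↔ q ∈ N.accept := by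
  rw [reindex, Set.mem_preimage, Equiv.symm_apply_apply]

theorem language_reindex : (N.reindex e).language = N.language := by
  ext w
  constructor
  · rintro ⟨s, hs, hacc⟩
    obtain ⟨q, rfl⟩ := e.surjective s
    exact ⟨q, (N.eval_reindex_eq_some_iff e).mp hs, (N.mem_accept_reindex e).mp hacc⟩
  · rintro ⟨q, hq, hacc⟩
    exact ⟨e q, (N.eval_reindex_eq_some_iff e).mpr hq, (N.mem_accept_reindex e).mpr hacc⟩

theorem prefLang_reindex : (N.reindex e).prefLang = N.prefLang := by
  unfold prefLang
  rw [language_reindex]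

variable {N} in
theorem Trim.reindex (h : N.Trim) : (N.reindex e).Trim := by
  refine ⟨fun s => ?_, fun s => ?_⟩
  · obtain ⟨w, hw⟩ := h.1 (e.symm s)
    exact ⟨w, by simpa using (eval_reindex_eq_some_iff N e).mpr hw⟩
  · obtain ⟨w, q, hw, hq⟩ := h.2 (e.symm s)
    refine ⟨w, e q, ?_, (N.mem_accept_reindex e).mpr hq⟩
    simpa [hw] using N.evalFrom_reindex e (e.symm s) w

theorem I_reindex (q : τ) : (N.reindex e).I (e q) = N.I q := by
  ext w
  simp [I, prefLang_reindex, eval_reindex_eq_some_iff]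

variable [LinearOrder α]

theorem entangledStates_reindex (S : Set τ) :
    (N.reindex e).EntangledStates (e '' S) ↔ N.EntangledStates S := by
  simp only [EntangledStates, prefLang_reindex, Set.forall_mem_image, eval_reindex_eq_some_iff]

theorem stateLt_reindex (q₁ q₂ : τ) :
    (N.reindex e).stateLt (e q₁) (e q₂) ↔ N.stateLt q₁ q₂ := by
  simp only [stateLt, I_reindex, ne_eq, e.injective.eq_iff]

theorem isColexAntichain_reindex (S : Set τ) :
    (N.reindex e).IsColexAntichain (e '' S) ↔ N.IsColexAntichain S := by
  simp only [IsColexAntichain, Set.forall_mem_image, ne_eq, e.injective.eq_iff, stateLt_reindex]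

theorem ent_reindex [Fintype τ] [Fintype τ'] : (N.reindex e).ent = N.ent := by
  unfold ent
  rw [setOf_card_eq_of_equiv e (N.entangledStates_reindex e)]

theorem width_reindex [Fintype τ] [Fintype τ'] : (N.reindex e).width = N.width := by
  unfold width
  rw [setOf_card_eq_of_equiv e (N.isColexAntichain_reindex e)]

end PDFA

/-- Theorem: for every (trim) DFA `B` there is an equivalent DFA `B'` with
`ent(B) = ent(B') = width(B')`. -/
theorem exists_equivalent_dfa_width_eq_ent {α σ : Type*} [LinearOrder α] [Fintype σ]
    (M : PDFA α σ) (hM : M.Trim) :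
    ∃ (m : ℕ) (M' : PDFA α (Fin m)), M'.Trim ∧ M'.language = M.language ∧
      M.ent = M'.ent ∧ M'.ent = M'.width := by
  have hε := hM.nil_mem_prefLang
  have : Finite M.SimClass := PDFA.finite_simClass
  have := Fintype.ofFinite M.SimClass
  let e := Fintype.equivFin M.SimClass
  refine ⟨_, (M.simQuotient hε).reindex e, (PDFA.simQuotient_trim hε).reindex e, ?_, ?_, ?_⟩
  · rw [PDFA.language_reindex, PDFA.language_simQuotient]
  · rw [PDFA.ent_reindex, PDFA.ent_simQuotient]
  · rw [PDFA.ent_reindex, PDFA.width_reindex, PDFA.width_simQuotient]
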